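/- arXiv:2509.11926 — 2 statements merged into one kernel-verified Lean document; each statement's English description precedes it below -/
import Mathlib

section
/- Let Θ ∈ ℝ^{M×M} be invertible and let A ∈ ℝ^{2M×2M} be the block matrix with top-right block A_{M,M} = Θ⁻¹ and all other blocks zero. Let H = [I_M 0] ∈ ℝ^{M×2M}. Then for any μ > 0, the matrix C = HᵀH + μ(I−A)ᵀHᵀH(I−A) is invertible and C⁻¹Hᵀ = [I_M; Θ], i.e., the solution x* = C⁻¹Hᵀy of the MAP problem satisfies x* = [y; Θy]. -/
/-!
With `B = H(I − A) = [I, −Θ⁻¹]` the matrix is `C = HᵀH + μBᵀB`, and the candidate `X = [I; Θ]`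
satisfies `HX = I` and `BX = I − Θ⁻¹Θ = 0`, so `CX = Hᵀ`. Invertibility of `C` comes from the
factorisation `C = Sᵀ diag(I, μI) S` with `S = [H; B] = [[I, 0], [I, −Θ⁻¹]]`, which is block
triangular with invertible diagonal blocks.
-/

open Matrix

namespace Matrix

variable {R : Type*} [CommRing R] {l m n k : Type*}

theorem transpose_mul_add_smul_transpose_mul_mul_eq [Fintype l] [Fintype m] [Fintype k]
    [DecidableEq l] {H : Matrix l k R} {B : Matrix m k R} {X : Matrix k l R} (μ : R)
    (hH : H * X = 1) (hB : B * X = 0) :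
    (Hᵀ * H + μ • (Bᵀ * B)) * X = Hᵀ := by
  rw [Matrix.add_mul, Matrix.smul_mul, Matrix.mul_assoc, hH, Matrix.mul_assoc, hB,
    Matrix.mul_one, Matrix.mul_zero, smul_zero, add_zero]

theorem transpose_mul_add_smul_transpose_mul_eq [Fintype l] [Fintype m] [Fintype k]
    [DecidableEq l] [DecidableEq m] (H : Matrix l k R) (B : Matrix m k R) (μ : R) :
    Hᵀ * H + μ • (Bᵀ * B) =
      (fromRows H B)ᵀ * fromBlocks (1 : Matrix l l R) 0 0 (μ • (1 : Matrix m m R)) *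
        fromRows H B := by
  rw [Matrix.mul_assoc, fromBlocks_mul_fromRows, transpose_fromRows, fromCols_mul_fromRows]
  simp

theorem isUnit_det_transpose_mul_add_smul_transpose_mul [Fintype m] [Fintype n]
    [DecidableEq m] [DecidableEq n] {H : Matrix m (m ⊕ n) R} {B : Matrix n (m ⊕ n) R} {μ : R}
    (hS : IsUnit (fromRows H B).det) (hμ : IsUnit μ) :
    IsUnit (Hᵀ * H + μ • (Bᵀ * B)).det := by
  rw [transpose_mul_add_smul_transpose_mul_eq, det_mul, det_mul, det_transpose,
    det_fromBlocks_zero₁₂, det_one, one_mul, det_smul, det_one, mul_one]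
  exact (hS.mul (hμ.pow _)).mul hS

theorem det_fromRows_fromCols_one_zero [Fintype m] [Fintype n] [DecidableEq m]
    [DecidableEq n] (X : Matrix n m R) (Q : Matrix n n R) :
    (fromRows (fromCols (1 : Matrix m m R) 0) (fromCols X Q)).det = Q.det := by
  rw [fromRows_fromCols_eq_fromBlocks, det_fromBlocks_zero₁₂, det_one, one_mul]

theorem fromCols_one_zero_mul_one_sub_fromBlocks [Fintype m] [Fintype n] [DecidableEq m]
    [DecidableEq n] (P : Matrix m n R) :
    fromCols (1 : Matrix m m R) (0 : Matrix m n R) *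
        (1 - fromBlocks 0 P 0 0 : Matrix (m ⊕ n) (m ⊕ n) R) = fromCols 1 (-P) := by
  rw [← fromBlocks_one, sub_eq_add_neg, fromBlocks_neg, fromBlocks_add,
    ← fromRows_fromCols_eq_fromBlocks, fromCols_mul_fromRows]
  simp

end Matrix

/-- Interpolator theorem: with `A` having `Θ⁻¹` as only nonzero (top-right) block and
`H = [I 0]`, the normal-equation matrix `C = HᵀH + μ(I−A)ᵀHᵀH(I−A)` is invertible and
`C⁻¹Hᵀ = [I; Θ]`, so `x* = C⁻¹Hᵀy = [y; Θy]`. -/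
theorem stmt0 (M : ℕ) (Θ : Matrix (Fin M) (Fin M) ℝ) (hΘ : IsUnit Θ.det)
    (μ : ℝ) (hμ : 0 < μ)
    (A : Matrix (Fin M ⊕ Fin M) (Fin M ⊕ Fin M) ℝ)
    (hA : A = Matrix.fromBlocks 0 Θ⁻¹ 0 0)
    (H : Matrix (Fin M) (Fin M ⊕ Fin M) ℝ)
    (hH : H = Matrix.fromCols 1 0)
    (C : Matrix (Fin M ⊕ Fin M) (Fin M ⊕ Fin M) ℝ)
    (hC : C = Hᵀ * H + μ • ((1 - A)ᵀ * Hᵀ * H * (1 - A))) :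
    IsUnit C.det ∧
    C⁻¹ * Hᵀ = Matrix.fromRows (1 : Matrix (Fin M) (Fin M) ℝ) Θ ∧
    ∀ y : Fin M → ℝ,
      (C⁻¹ *ᵥ (Hᵀ *ᵥ y)) = Sum.elim y (Θ *ᵥ y) := by
  set B := fromCols (1 : Matrix (Fin M) (Fin M) ℝ) (-Θ⁻¹)
  have hHA : H * (1 - A) = B := by rw [hH, hA, fromCols_one_zero_mul_one_sub_fromBlocks]
  have hCB : C = Hᵀ * H + μ • (Bᵀ * B) := by
    rw [hC, ← hHA, transpose_mul]
    simp only [Matrix.mul_assoc]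
  have hdet : IsUnit C.det := by
    rw [hCB]
    refine isUnit_det_transpose_mul_add_smul_transpose_mul ?_ hμ.ne'.isUnit
    rw [hH, det_fromRows_fromCols_one_zero, det_neg]
    exact (isUnit_neg_one.pow _).mul (isUnit_nonsing_inv_det_iff.mpr hΘ)
  have hCX : C * fromRows (1 : Matrix (Fin M) (Fin M) ℝ) Θ = Hᵀ := by
    rw [hCB]
    refine transpose_mul_add_smul_transpose_mul_mul_eq μ ?_ ?_
    · simp [hH, fromCols_mul_fromRows]
    · simp [B, fromCols_mul_fromRows, nonsing_inv_mul _ hΘ]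
  have hsol : C⁻¹ * Hᵀ = fromRows (1 : Matrix (Fin M) (Fin M) ℝ) Θ := by
    rw [← hCX, nonsing_inv_mul_cancel_left C _ hdet]
  refine ⟨hdet, hsol, fun y => ?_⟩
  rw [mulVec_mulVec, hsol, fromRows_mulVec, one_mulVec]
end

section
/- Let H = [I_M 0] ∈ ℝ^{M×(M+N)} and A have only nonzero top-right block A_{M,N} ∈ ℝ^{M×N} with M = N and A_{M,N} invertible. Then the block matrix C = [[(1+μ)I_M, −μA_{M,N}], [−μA_{M,N}ᵀ, μA_{M,N}ᵀA_{M,N}]] is invertible for every μ > 0. -/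
/-!
`C` is the Gram matrix of the quadratic form `‖x₁‖² + μ ‖x₁ - A x₂‖²`, i.e.
`C = Tᵀ · diag(I, μ I) · T` with `T = [[I, 0], [I, -A]]`. Hence `det C = μ ^ M · (det A) ^ 2`,
a unit as soon as `μ ≠ 0` and `A` is invertible.
-/

open Matrix

variable {n R : Type*} [Fintype n] [DecidableEq n] [CommRing R]

def normalMatrix (μ : R) (A : Matrix n n R) : Matrix (n ⊕ n) (n ⊕ n) R :=
  fromBlocks ((1 + μ) • (1 : Matrix n n R)) (-μ • A) (-μ • Aᵀ) (μ • (Aᵀ * A))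

theorem normalMatrix_eq_transpose_mul_mul (μ : R) (A : Matrix n n R) :
    normalMatrix μ A =
      (fromBlocks 1 0 1 (-A))ᵀ * fromBlocks 1 0 0 (μ • 1) * fromBlocks 1 0 1 (-A) := by
  simp only [normalMatrix, fromBlocks_transpose, fromBlocks_multiply]
  congr 1 <;> simp [add_smul, neg_smul]

theorem det_normalMatrix (μ : R) (A : Matrix n n R) :
    (normalMatrix μ A).det = μ ^ Fintype.card n * A.det ^ 2 := by
  rw [normalMatrix_eq_transpose_mul_mul, det_mul, det_mul, det_transpose,
    det_fromBlocks_zero₁₂, det_fromBlocks_zero₁₂, det_smul, det_neg]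
  have hsign : ((-1 : R) ^ Fintype.card n) ^ 2 = 1 := by
    rw [← pow_mul, pow_mul', neg_one_sq, one_pow]
  simp only [det_one, one_mul, mul_one]
  linear_combination (μ ^ Fintype.card n * A.det ^ 2) * hsign

/-- Invertibility of the normal-equation block matrix
`C = [[(1+μ)I, −μA], [−μAᵀ, μAᵀA]]` when `A` is square and invertible and `μ > 0`. -/
theorem stmt14 (M : ℕ) (Amn : Matrix (Fin M) (Fin M) ℝ) (hA : IsUnit Amn.det)
    (μ : ℝ) (hμ : 0 < μ)
    (C : Matrix (Fin M ⊕ Fin M) (Fin M ⊕ Fin M) ℝ)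
    (hC : C = Matrix.fromBlocks ((1 + μ) • (1 : Matrix (Fin M) (Fin M) ℝ)) (-μ • Amn)
      (-μ • Amnᵀ) (μ • (Amnᵀ * Amn))) :
    IsUnit C.det := by
  change C = normalMatrix μ Amn at hC
  rw [hC, det_normalMatrix]
  exact (hμ.ne'.isUnit.pow _).mul (hA.pow 2)
end
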